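/- Let P, y, z be prime numbers with P ≥ 5 and z odd, and let x be a natural number such that P^x = (y^z - 1)/(y - 1). Then P ≡ 1 (mod z). -/

import Mathlib

/-!
Reduce modulo `P`: since `P ∣ 1 + y + ⋯ + y^(z-1)`, the residue of `y` satisfies `y^z = 1`, so its
multiplicative order is `z` or `1`. Order `z` gives `z ∣ P - 1`. Order `1` means `y ≡ 1 (mod P)`,
so the sum is `≡ z (mod P)` and `P = z`; lifting the exponent then shows that `P` divides the sum
exactly once, so `P = 1 + y + ⋯ + y^(P-1) > P`, which is absurd.
-/

open Finset

theorem pow_eq_one_of_geom_sum_eq_zero {R : Type*} [CommRing R] {u : R} {n : ℕ}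
    (h : ∑ i ∈ range n, u ^ i = 0) : u ^ n = 1 := by
  have hmul := geom_sum_mul u n
  rw [h, zero_mul] at hmul
  exact sub_eq_zero.mp hmul.symm

theorem Nat.dvd_sub_one_or_eq_and_modEq_one_of_dvd_geom_sum {p q y : ℕ} (hp : p.Prime)
    (hq : q.Prime) (h : p ∣ ∑ i ∈ range q, y ^ i) : q ∣ p - 1 ∨ p = q ∧ y ≡ 1 [MOD p] := by
  have : Fact p.Prime := ⟨hp⟩
  have hsum : ∑ i ∈ range q, (y : ZMod p) ^ i = 0 := by
    exact_mod_cast (ZMod.natCast_eq_zero_iff _ p).mpr h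
  have hyq : (y : ZMod p) ^ q = 1 := pow_eq_one_of_geom_sum_eq_zero hsum
  have hy0 : (y : ZMod p) ≠ 0 := by
    rintro hy
    rw [hy, zero_pow hq.ne_zero] at hyq
    exact zero_ne_one hyq
  rcases hq.eq_one_or_self_of_dvd _ (orderOf_dvd_of_pow_eq_one hyq) with hord | hord
  · have hy1 : (y : ZMod p) = 1 := orderOf_eq_one_iff.mp hord
    have hqp : ((q : ℕ) : ZMod p) = 0 := by simpa [hy1] using hsum
    refine Or.inr ⟨(Nat.prime_dvd_prime_iff_eq hp hq).mp ((ZMod.natCast_eq_zero_iff q p).mp hqp), ?_⟩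
    exact (ZMod.natCast_eq_natCast_iff y 1 p).mp (by simpa using hy1)
  · exact Or.inl (hord ▸ ZMod.orderOf_dvd_card_sub_one hy0)

theorem Nat.emultiplicity_geom_sum_eq_one {p y : ℕ} (hp : p.Prime) (hodd : Odd p)
    (hy : y ≡ 1 [MOD p]) : emultiplicity p (∑ i ∈ range p, y ^ i) = 1 := by
  have hdvd : (p : ℤ) ∣ (y : ℤ) - 1 := by simpa using hy.symm.dvd
  have hndvd : ¬(p : ℤ) ∣ (y : ℤ) := by
    rw [dvd_iff_dvd_of_dvd_sub hdvd]
    exact_mod_cast hp.not_dvd_one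
  have hint := emultiplicity_geom_sum₂_eq_one (Nat.prime_iff_prime_int.mp hp) hodd hdvd hndvd
  simp only [one_pow, mul_one] at hint
  rw [← Int.natCast_emultiplicity]
  exact_mod_cast hint

theorem Nat.lt_geom_sum {y n : ℕ} (hy : 2 ≤ y) (hn : 2 ≤ n) : n < ∑ i ∈ range n, y ^ i := by
  calc n = ∑ _i ∈ range n, 1 := by simp
    _ < ∑ i ∈ range n, y ^ i :=
      sum_lt_sum (fun i _ => Nat.one_le_pow _ _ (by omega))
        ⟨1, mem_range.mpr (by omega), by simpa using by omega⟩

theorem stmt_7_general (P y z x : ℕ) (hP : P.Prime) (hy : y.Prime) (hz : z.Prime)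
    (hP5 : 5 ≤ P) (hx : 0 < x)
    (h : P ^ x = ∑ i ∈ Finset.range z, y ^ i) :
    P ≡ 1 [MOD z] := by
  have hdvd : P ∣ ∑ i ∈ range z, y ^ i := h ▸ dvd_pow_self P hx.ne'
  rcases Nat.dvd_sub_one_or_eq_and_modEq_one_of_dvd_geom_sum hP hz hdvd with hzP | ⟨rfl, hy1⟩
  · exact ((Nat.modEq_iff_dvd' hP.one_le).mpr hzP).symm
  · have hx1 : x = 1 := by
      have hmult := Nat.emultiplicity_geom_sum_eq_one hP (hP.odd_of_ne_two (by omega)) hy1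
      rwa [← h, emultiplicity_pow_self_of_prime hP.prime, Nat.cast_eq_one] at hmult
    have hlt := Nat.lt_geom_sum hy.two_le hP.two_le
    rw [← h, hx1, pow_one] at hlt
    exact (lt_irrefl P hlt).elim

/-- If `P, y, z` are primes with `P ≥ 5` and `z` odd, and `x` is a positive
natural with `P^x = (y^z - 1)/(y - 1) = 1 + y + ⋯ + y^(z-1)`, then
`P ≡ 1 (mod z)`. -/
theorem stmt_7 (P y z x : ℕ) (hP : P.Prime) (hy : y.Prime) (hz : z.Prime)
    (hP5 : 5 ≤ P) (hzo : Odd z) (hx : 0 < x)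
    (h : P ^ x = ∑ i ∈ Finset.range z, y ^ i) :
    P ≡ 1 [MOD z] :=
  stmt_7_general P y z x hP hy hz hP5 hx h
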